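/- Let Γ be a profinite group and let 0 → V' → V → V'' → 0 be a Γ-equivariant exact sequence of nonarchimedean Banach Γ-modules, where Γ acts by isometries, V' → V is an isometric embedding with closed image, and V'' carries the quotient norm. Suppose the quotient map V → V'' admits a bounded (not necessarily Γ-equivariant) linear section s of operator norm at most K ≥ 1, and suppose the continuous cochain complexes C^•(Γ, V') and C^•(Γ, V'') are uniformly strict exact with constants c' ≥ 1 and c'' ≥ 1 respectively. Then C^•(Γ, V) is uniformly strict exact with constant c' K c''. -/

import Mathlib

open scoped NNReal ENNReal

/-- Inhomogeneous continuous-cochain differential for a group `Γ` acting (via `act`) on an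
abelian group `N`: the usual group-cohomology differential on `C^n(Γ, N)`. -/
def cochainD {Γ N : Type*} [Group Γ] [AddCommGroup N]
    (act : Γ → N → N) (n : ℕ) (f : (Fin n → Γ) → N) :
    (Fin (n + 1) → Γ) → N :=
  fun g => act (g 0) (f fun i => g i.succ) +
    ∑ j : Fin (n + 1), ((-1 : ℤ) ^ ((j : ℕ) + 1)) • f (Fin.contractNth j (· * ·) g)

/-- The supremum norm of a cochain, valued in `ℝ≥0∞`. -/
noncomputable def supNorm {X M : Type*} [SeminormedAddCommGroup M] (f : X → M) : ℝ≥0∞ :=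
  ⨆ x, (‖f x‖₊ : ℝ≥0∞)

/-!
Dévissage along `0 → S → V → V ⧸ S → 0`. The image of a cocycle `F` in `V ⧸ S` has a
primitive of norm `≤ c'' ‖F‖`; lifting it through `s` gives `G₁` with `‖G₁‖ ≤ K c'' ‖F‖` and
`F - dG₁` an `S`-valued cocycle (by `d ∘ d = 0`), which has a primitive `G₂` of norm
`≤ c' K c'' ‖F‖`. Then `G₁ + G₂` is a primitive of `F`. Since `Γ` acts by isometries and the
norm is ultrametric, `d` does not increase the sup norm and the norms of sums are bounded by
maxima, so the constants multiply instead of adding up.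
-/

universe u v

section Cochains

variable {Γ : Type*} [Group Γ]

theorem comp_cochainD {M N : Type*} [AddCommGroup M] [AddCommGroup N] {actM : Γ → M → M}
    {actN : Γ → N → N} (φ : M →+ N) (hφ : ∀ γ x, φ (actM γ x) = actN γ (φ x)) (n : ℕ)
    (f : (Fin n → Γ) → M) : φ ∘ cochainD actM n f = cochainD actN n (φ ∘ f) := by
  funext g
  simp only [Function.comp_apply, cochainD, map_add, map_sum, map_zsmul, hφ]

theorem cochainD_comp_eq_zero {M N : Type*} [AddCommGroup M] [AddCommGroup N]
    {actM : Γ → M → M} {actN : Γ → N → N} (φ : M →+ N)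
    (hφ : ∀ γ x, φ (actM γ x) = actN γ (φ x)) {n : ℕ} {f : (Fin n → Γ) → M}
    (hf : cochainD actM n f = 0) : cochainD actN n (φ ∘ f) = 0 := by
  rw [← comp_cochainD φ hφ, hf]
  exact funext fun _ => map_zero φ

theorem cochainD_comp_eq_zero_iff {M N : Type*} [AddCommGroup M] [AddCommGroup N]
    {actM : Γ → M → M} {actN : Γ → N → N} {φ : M →+ N} (hinj : Function.Injective φ)
    (hφ : ∀ γ x, φ (actM γ x) = actN γ (φ x)) {n : ℕ} {f : (Fin n → Γ) → M} :
    cochainD actN n (φ ∘ f) = 0 ↔ cochainD actM n f = 0 := by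
  have hφ0 : φ ∘ (0 : (Fin (n + 1) → Γ) → M) = 0 := funext fun _ => map_zero φ
  rw [← comp_cochainD φ hφ, ← hinj.comp_left.eq_iff, hφ0]

theorem cochainD_add {N : Type*} [AddCommGroup N] {act : Γ → N → N}
    (hact : ∀ γ x y, act γ (x + y) = act γ x + act γ y) (n : ℕ) (f f' : (Fin n → Γ) → N) :
    cochainD act n (f + f') = cochainD act n f + cochainD act n f' := by
  funext g
  simp only [cochainD, Pi.add_apply, hact, smul_add, Finset.sum_add_distrib, add_add_add_comm]

theorem cochainD_sub {N : Type*} [AddCommGroup N] {act : Γ → N → N}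
    (hact : ∀ γ x y, act γ (x - y) = act γ x - act γ y) (n : ℕ) (f f' : (Fin n → Γ) → N) :
    cochainD act n (f - f') = cochainD act n f - cochainD act n f' := by
  funext g
  simp only [cochainD, Pi.sub_apply, hact, smul_sub, Finset.sum_sub_distrib, add_sub_add_comm]

theorem Fin.contractNth_mul_comp {G H F : Type*} [Mul G] [Mul H] [FunLike F G H]
    [MulHomClass F G H] (e : F) {n : ℕ} (j : Fin (n + 1)) (g : Fin (n + 1) → G) :
    Fin.contractNth j (· * ·) (e ∘ g) = e ∘ Fin.contractNth j (· * ·) g := by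
  funext i
  simp only [Fin.contractNth, Function.comp_apply]
  split_ifs <;> simp

theorem cochainD_comp_monoidHom {G N : Type*} [Group G] [AddCommGroup N]
    (act : Γ → N → N) (e : G →* Γ) (n : ℕ) (f : (Fin n → Γ) → N) (g : Fin (n + 1) → G) :
    cochainD (fun γ => act (e γ)) n (fun h => f (e ∘ h)) g = cochainD act n f (e ∘ g) := by
  simp only [cochainD, Fin.contractNth_mul_comp]
  rfl

theorem cochainD_eq_inhomogeneousCochains_d {k G : Type u} [CommRing k] [Group G]
    (A : Rep.{u} k G) (n : ℕ) (f : (Fin n → G) → A) :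
    cochainD (fun γ x => A.ρ γ x) n f = (inhomogeneousCochains.d A n).hom f := by
  funext g
  simp only [cochainD, inhomogeneousCochains.d_hom_apply, ← Int.cast_smul_eq_zsmul k]
  push_cast
  rfl

theorem cochainD_cochainD_rep {k G : Type u} [CommRing k] [Group G] (A : Rep.{u} k G)
    (n : ℕ) (f : (Fin n → G) → A) :
    cochainD (fun γ x => A.ρ γ x) (n + 1) (cochainD (fun γ x => A.ρ γ x) n f) = 0 := by
  simp only [cochainD_eq_inhomogeneousCochains_d]
  exact congrArg (fun φ => ModuleCat.Hom.hom φ f)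
    (groupCohomology.inhomogeneousCochains.d_comp_d n A)

end Cochains

/-- `Rep` and `inhomogeneousCochains.d_comp_d` need the ring, the group and the module in one
universe. -/
def AddAut.uliftRepresentation {Γ : Type u} {V : Type v} [Group Γ] [AddCommGroup V]
    (ρ : Γ →* Multiplicative (AddAut V)) :
    Representation (ULift.{max u v} ℤ) (ULift.{max u v} Γ) (ULift.{max u v} V) where
  toFun γ :=
    { toFun x := ULift.up (ρ γ.down x.down)
      map_add' x y := ULift.ext _ _ (map_add (Multiplicative.toAdd (ρ γ.down)) x.down y.down)
      map_smul' c x := ULift.ext _ _ (map_zsmul (Multiplicative.toAdd (ρ γ.down)) c.down x.down) }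
  map_one' := LinearMap.ext fun x => ULift.ext _ _ (by simp)
  map_mul' γ δ := LinearMap.ext fun x => ULift.ext _ _ (by simp)

theorem cochainD_cochainD {Γ : Type u} {V : Type v} [Group Γ] [AddCommGroup V]
    (ρ : Γ →* Multiplicative (AddAut V)) (n : ℕ) (f : (Fin n → Γ) → V) :
    cochainD (fun γ v => ρ γ v) (n + 1) (cochainD (fun γ v => ρ γ v) n f) = 0 := by
  let A : Rep (ULift ℤ) (ULift Γ) := Rep.of (AddAut.uliftRepresentation ρ)
  let e : ULift.{max u v} Γ →* Γ := MulEquiv.ulift.toMonoidHom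
  let lift (m : ℕ) (f : (Fin m → Γ) → V) : (Fin m → ULift Γ) → A :=
    fun h => ULift.up (f (e ∘ h))
  have cochainD_lift (m : ℕ) (f : (Fin m → Γ) → V) :
      cochainD (fun γ x => A.ρ γ x) m (lift m f) =
        lift (m + 1) (cochainD (fun γ v => ρ γ v) m f) := by
    funext h
    apply ULift.down_injective
    exact (congrFun (comp_cochainD (actM := fun γ x => A.ρ γ x) (actN := fun γ v => ρ (e γ) v)
      (AddEquiv.ulift : A ≃+ V).toAddMonoidHom (fun _ _ => rfl) m _) h).trans
      (cochainD_comp_monoidHom (fun γ v => ρ γ v) e m f h)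
  funext g
  have hzero := congrFun (cochainD_cochainD_rep A n (lift n f)) (ULift.up ∘ g)
  rw [cochainD_lift, cochainD_lift] at hzero
  exact congrArg ULift.down hzero

theorem continuous_cochainD {Γ N : Type*} [Group Γ] [TopologicalSpace Γ] [IsTopologicalGroup Γ]
    [AddCommGroup N] [TopologicalSpace N] [IsTopologicalAddGroup N] {act : Γ → N → N}
    (hact : Continuous fun p : Γ × N => act p.1 p.2) (n : ℕ) {f : (Fin n → Γ) → N}
    (hf : Continuous f) : Continuous (cochainD act n f) := by
  have hcontract (j : Fin (n + 1)) :
      Continuous fun g : Fin (n + 1) → Γ => Fin.contractNth j (· * ·) g := by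
    refine continuous_pi fun i => ?_
    simp only [Fin.contractNth]
    split_ifs
    exacts [continuous_apply _, (continuous_apply _).mul (continuous_apply _), continuous_apply _]
  refine (hact.comp ((continuous_apply 0).prodMk ?_)).add
    (continuous_finsetSum _ fun j _ => (hf.comp (hcontract j)).zsmul _)
  exact hf.comp (continuous_pi fun i => continuous_apply i.succ)

section SupNorm

variable {X M N : Type*} [SeminormedAddCommGroup M] [SeminormedAddCommGroup N]

theorem nnnorm_le_supNorm (f : X → M) (x : X) : (‖f x‖₊ : ℝ≥0∞) ≤ supNorm f :=
  le_iSup (fun x => (‖f x‖₊ : ℝ≥0∞)) x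

theorem supNorm_le_iff {f : X → M} {t : ℝ≥0∞} :
    supNorm f ≤ t ↔ ∀ x, (‖f x‖₊ : ℝ≥0∞) ≤ t :=
  iSup_le_iff

theorem supNorm_comp_le {φ : M → N} {C : ℝ≥0} (hφ : ∀ x, ‖φ x‖ ≤ C * ‖x‖) (f : X → M) :
    supNorm (φ ∘ f) ≤ C * supNorm f := by
  refine supNorm_le_iff.2 fun x => ?_
  calc (‖φ (f x)‖₊ : ℝ≥0∞) ≤ ((C * ‖f x‖₊ : ℝ≥0) : ℝ≥0∞) := ENNReal.coe_le_coe.2 (hφ (f x))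
    _ ≤ C * supNorm f := by push_cast; gcongr; exact nnnorm_le_supNorm f x

theorem supNorm_add_le [IsUltrametricDist M] (f g : X → M) :
    supNorm (f + g) ≤ max (supNorm f) (supNorm g) := by
  refine supNorm_le_iff.2 fun x => ?_
  calc (‖f x + g x‖₊ : ℝ≥0∞) ≤ ((max ‖f x‖₊ ‖g x‖₊ : ℝ≥0) : ℝ≥0∞) :=
        ENNReal.coe_le_coe.2 (IsUltrametricDist.nnnorm_add_le_max _ _)
    _ ≤ max (supNorm f) (supNorm g) := by
        push_cast
        exact max_le_max (nnnorm_le_supNorm f x) (nnnorm_le_supNorm g x)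

theorem supNorm_neg (f : X → M) : supNorm (-f) = supNorm f := by
  simp only [supNorm, Pi.neg_apply, nnnorm_neg]

theorem supNorm_sub_le [IsUltrametricDist M] (f g : X → M) :
    supNorm (f - g) ≤ max (supNorm f) (supNorm g) := by
  simpa only [sub_eq_add_neg, supNorm_neg] using supNorm_add_le f (-g)

theorem supNorm_cochainD_le {Γ : Type*} [Group Γ] [IsUltrametricDist M] {act : Γ → M → M}
    (hact : ∀ γ x, ‖act γ x‖ = ‖x‖) (n : ℕ) (f : (Fin n → Γ) → M) :
    supNorm (cochainD act n f) ≤ supNorm f := by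
  obtain htop | hlt := eq_top_or_lt_top (supNorm f)
  · exact htop ▸ le_top
  lift supNorm f to ℝ≥0 using hlt.ne with T hT
  have hfT (x : Fin n → Γ) : ‖f x‖₊ ≤ T := ENNReal.coe_le_coe.1 (hT ▸ nnnorm_le_supNorm f x)
  refine supNorm_le_iff.2 fun g => ENNReal.coe_le_coe.2 <|
    (IsUltrametricDist.nnnorm_add_le_max _ _).trans (max_le ?_ ?_)
  · simpa only [← NNReal.coe_le_coe, coe_nnnorm, hact] using hfT _
  · exact IsUltrametricDist.nnnorm_sum_le_of_forall_le fun j _ =>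
      (IsUltrametricDist.nnnorm_zsmul_le _ _).trans (hfT _)

end SupNorm

section StrictExactness

variable {Γ N : Type*} [Group Γ] [TopologicalSpace Γ] [SeminormedAddCommGroup N]

/-- `Fin 0 → Γ` is a point, so this is the vanishing of `H⁰(Γ, N) = N^Γ`. -/
def IsExactInDegreeZero (act : Γ → N → N) : Prop :=
  ∀ F : (Fin 0 → Γ) → N, Continuous F → cochainD act 0 F = 0 → F = 0

def IsUniformlyExactInPositiveDegrees (act : Γ → N → N) (c : ℝ≥0) : Prop :=
  ∀ (n : ℕ) (F : (Fin (n + 1) → Γ) → N), Continuous F → cochainD act (n + 1) F = 0 →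
    ∃ G : (Fin n → Γ) → N, Continuous G ∧ cochainD act n G = F ∧
      supNorm G ≤ (c : ℝ≥0∞) * supNorm F

def IsUniformlyStrictExact (act : Γ → N → N) (c : ℝ≥0) : Prop :=
  IsExactInDegreeZero act ∧ IsUniformlyExactInPositiveDegrees act c

end StrictExactness

section Devissage

variable {Γ V : Type*} [Group Γ] [TopologicalSpace Γ] [SeminormedAddCommGroup V]
  {ρ : Γ →* Multiplicative (AddAut V)} {S : AddSubgroup V} {actS : Γ → S → S}
  {actQ : Γ → V ⧸ S → V ⧸ S}

theorem IsExactInDegreeZero.of_addSubgroup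
    (hactS : ∀ (γ : Γ) (x : S), (actS γ x : V) = ρ γ x)
    (hactQ : ∀ (γ : Γ) (v : V), actQ γ v = ρ γ v)
    (hS : IsExactInDegreeZero actS) (hQ : IsExactInDegreeZero actQ) :
    IsExactInDegreeZero fun γ v => ρ γ v := by
  intro F hF hdF
  have hFQ : QuotientAddGroup.mk' S ∘ F = 0 :=
    hQ _ (continuous_quotient_mk'.comp hF)
      (cochainD_comp_eq_zero _ (fun γ v => (hactQ γ v).symm) hdF)
  have hFS (g : Fin 0 → Γ) : F g ∈ S := (QuotientAddGroup.eq_zero_iff _).1 (congrFun hFQ g)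
  have hS0 := hS (fun g => ⟨F g, hFS g⟩) (hF.subtype_mk _)
    ((cochainD_comp_eq_zero_iff S.subtype_injective hactS).1 hdF)
  funext g
  exact congrArg Subtype.val (congrFun hS0 g)

theorem exists_sub_cochainD_mem_of_section (hactQ : ∀ (γ : Γ) (v : V), actQ γ v = ρ γ v)
    {K c'' : ℝ≥0} (s : V ⧸ S →+ V) (hsec : ∀ q : V ⧸ S, (s q : V ⧸ S) = q)
    (hbd : ∀ q : V ⧸ S, ‖s q‖ ≤ K * ‖q‖) (hQ : IsUniformlyExactInPositiveDegrees actQ c'')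
    {n : ℕ} {F : (Fin (n + 1) → Γ) → V} (hF : Continuous F)
    (hdF : cochainD (fun γ v => ρ γ v) (n + 1) F = 0) :
    ∃ G : (Fin n → Γ) → V, Continuous G ∧ supNorm G ≤ K * (c'' * supNorm F) ∧
      ∀ g, F g - cochainD (fun γ v => ρ γ v) n G g ∈ S := by
  have hcommQ (γ : Γ) (v : V) : QuotientAddGroup.mk' S (ρ γ v) = actQ γ v := (hactQ γ v).symm
  obtain ⟨Gq, hGq, hdGq, hGqnorm⟩ := hQ n (QuotientAddGroup.mk' S ∘ F)
    (continuous_quotient_mk'.comp hF) (cochainD_comp_eq_zero _ hcommQ hdF)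
  refine ⟨s ∘ Gq, (AddMonoidHomClass.continuous_of_bound s K hbd).comp hGq, ?_, fun g => ?_⟩
  · calc supNorm (s ∘ Gq) ≤ K * supNorm Gq := supNorm_comp_le hbd Gq
      _ ≤ K * (c'' * supNorm (QuotientAddGroup.mk' S ∘ F)) := by gcongr
      _ ≤ K * (c'' * supNorm F) := by
        gcongr
        simpa using supNorm_comp_le (C := 1) (φ := QuotientAddGroup.mk' S)
          (fun v => by simpa using QuotientAddGroup.norm_mk_le_norm) F
  · have hmk := congrFun (comp_cochainD (QuotientAddGroup.mk' S) hcommQ n (s ∘ Gq)) g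
    have hsGq : QuotientAddGroup.mk' S ∘ s ∘ Gq = Gq := funext fun x => hsec (Gq x)
    rw [hsGq, hdGq] at hmk
    rw [← QuotientAddGroup.eq_zero_iff, QuotientAddGroup.mk_sub]
    exact sub_eq_zero.2 hmk.symm

theorem IsUniformlyExactInPositiveDegrees.of_addSubgroup [IsTopologicalGroup Γ]
    [IsUltrametricDist V] (hρiso : ∀ (γ : Γ) (v : V), ‖ρ γ v‖ = ‖v‖)
    (hρcont : Continuous fun p : Γ × V => ρ p.1 p.2)
    (hactS : ∀ (γ : Γ) (x : S), (actS γ x : V) = ρ γ x)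
    (hactQ : ∀ (γ : Γ) (v : V), actQ γ v = ρ γ v)
    {K c' c'' : ℝ≥0} (hK : 1 ≤ K) (hc' : 1 ≤ c') (hc'' : 1 ≤ c'')
    (s : V ⧸ S →+ V) (hsec : ∀ q : V ⧸ S, (s q : V ⧸ S) = q)
    (hbd : ∀ q : V ⧸ S, ‖s q‖ ≤ K * ‖q‖)
    (hS : IsUniformlyExactInPositiveDegrees actS c')
    (hQ : IsUniformlyExactInPositiveDegrees actQ c'') :
    IsUniformlyExactInPositiveDegrees (fun γ v => ρ γ v) (c' * K * c'') := by
  intro n F hF hdF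
  set T := supNorm F
  obtain ⟨G₁, hG₁, hG₁norm, hmem⟩ :=
    exists_sub_cochainD_mem_of_section hactQ s hsec hbd hQ hF hdF
  let H : (Fin (n + 1) → Γ) → S := fun g => ⟨F g - cochainD (fun γ v => ρ γ v) n G₁ g, hmem g⟩
  have hHval : S.subtype ∘ H = F - cochainD (fun γ v => ρ γ v) n G₁ := rfl
  have hdH : cochainD actS (n + 1) H = 0 := by
    rw [← cochainD_comp_eq_zero_iff S.subtype_injective hactS, hHval,
      cochainD_sub (act := fun γ v => ρ γ v) (fun γ => map_sub _), hdF, cochainD_cochainD,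
      sub_zero]
  have hT : T ≤ K * (c'' * T) := by
    rw [← mul_assoc]
    exact le_mul_of_one_le_left' (by exact_mod_cast one_le_mul hK hc'')
  have hHnorm : supNorm H ≤ K * (c'' * T) :=
    calc supNorm H = supNorm (F - cochainD (fun γ v => ρ γ v) n G₁) := rfl
      _ ≤ max T (supNorm (cochainD (fun γ v => ρ γ v) n G₁)) := supNorm_sub_le _ _
      _ ≤ K * (c'' * T) := max_le hT ((supNorm_cochainD_le hρiso n G₁).trans hG₁norm)
  obtain ⟨G₂, hG₂, hdG₂, hG₂norm⟩ :=
    hS n H ((hF.sub (continuous_cochainD hρcont n hG₁)).subtype_mk _) hdH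
  refine ⟨G₁ + S.subtype ∘ G₂, hG₁.add (continuous_subtype_val.comp hG₂), ?_, ?_⟩
  · rw [cochainD_add (act := fun γ v => ρ γ v) (fun γ => map_add _),
      ← comp_cochainD S.subtype hactS, hdG₂, hHval, add_sub_cancel]
  · have hc'1 : (1 : ℝ≥0∞) ≤ c' := by exact_mod_cast hc'
    calc supNorm (G₁ + S.subtype ∘ G₂) ≤ max (supNorm G₁) (supNorm G₂) := supNorm_add_le _ _
      _ ≤ c' * (K * (c'' * T)) :=
        max_le (hG₁norm.trans (le_mul_of_one_le_left' hc'1)) (hG₂norm.trans (by gcongr))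
      _ = ((c' * K * c'' : ℝ≥0) : ℝ≥0∞) * T := by push_cast; ring

theorem IsUniformlyStrictExact.of_addSubgroup [IsTopologicalGroup Γ] [IsUltrametricDist V]
    (hρiso : ∀ (γ : Γ) (v : V), ‖ρ γ v‖ = ‖v‖)
    (hρcont : Continuous fun p : Γ × V => ρ p.1 p.2)
    (hactS : ∀ (γ : Γ) (x : S), (actS γ x : V) = ρ γ x)
    (hactQ : ∀ (γ : Γ) (v : V), actQ γ v = ρ γ v)
    {K c' c'' : ℝ≥0} (hK : 1 ≤ K) (hc' : 1 ≤ c') (hc'' : 1 ≤ c'')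
    (s : V ⧸ S →+ V) (hsec : ∀ q : V ⧸ S, (s q : V ⧸ S) = q)
    (hbd : ∀ q : V ⧸ S, ‖s q‖ ≤ K * ‖q‖)
    (hS : IsUniformlyStrictExact actS c') (hQ : IsUniformlyStrictExact actQ c'') :
    IsUniformlyStrictExact (fun γ v => ρ γ v) (c' * K * c'') :=
  ⟨hS.1.of_addSubgroup hactS hactQ hQ.1,
    hS.2.of_addSubgroup hρiso hρcont hactS hactQ hK hc' hc'' s hsec hbd hQ.2⟩

end Devissage

theorem stmt_8_general {Γ V : Type*} [Group Γ] [TopologicalSpace Γ] [IsTopologicalGroup Γ]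
    [NormedAddCommGroup V]
    (hna : ∀ x y : V, ‖x + y‖ ≤ max ‖x‖ ‖y‖)
    (ρ : Γ →* Multiplicative (AddAut V))
    (hρiso : ∀ (γ : Γ) (v : V), ‖ρ γ v‖ = ‖v‖)
    (hρcont : Continuous fun p : Γ × V => ρ p.1 p.2)
    (S : AddSubgroup V)
    (actS : Γ → S → S)
    (hactS : ∀ (γ : Γ) (x : S), (actS γ x : V) = ρ γ (x : V))
    (actQ : Γ → V ⧸ S → V ⧸ S)
    (hactQ : ∀ (γ : Γ) (v : V),
      actQ γ (QuotientAddGroup.mk v) = QuotientAddGroup.mk (ρ γ v))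
    (K : ℝ≥0) (hK : 1 ≤ K)
    (s : V ⧸ S → V) (hadd : ∀ x y, s (x + y) = s x + s y)
    (hsec : ∀ q : V ⧸ S, (QuotientAddGroup.mk (s q) : V ⧸ S) = q)
    (hbd : ∀ q : V ⧸ S, ‖s q‖ ≤ (K : ℝ) * ‖q‖)
    (c' c'' : ℝ≥0) (hc' : 1 ≤ c') (hc'' : 1 ≤ c'')
    (hexactS0 : ∀ F : (Fin 0 → Γ) → S, Continuous F → cochainD actS 0 F = 0 → F = 0)
    (hexactS : ∀ (n : ℕ) (F : (Fin (n + 1) → Γ) → S), Continuous F →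
      cochainD actS (n + 1) F = 0 →
      ∃ G : (Fin n → Γ) → S, Continuous G ∧ cochainD actS n G = F ∧
        supNorm G ≤ (c' : ℝ≥0∞) * supNorm F)
    (hexactQ0 : ∀ F : (Fin 0 → Γ) → V ⧸ S, Continuous F → cochainD actQ 0 F = 0 → F = 0)
    (hexactQ : ∀ (n : ℕ) (F : (Fin (n + 1) → Γ) → V ⧸ S), Continuous F →
      cochainD actQ (n + 1) F = 0 →
      ∃ G : (Fin n → Γ) → V ⧸ S, Continuous G ∧ cochainD actQ n G = F ∧
        supNorm G ≤ (c'' : ℝ≥0∞) * supNorm F) :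
    (∀ F : (Fin 0 → Γ) → V, Continuous F →
      cochainD (fun γ v => ρ γ v) 0 F = 0 → F = 0) ∧
    (∀ (n : ℕ) (F : (Fin (n + 1) → Γ) → V), Continuous F →
      cochainD (fun γ v => ρ γ v) (n + 1) F = 0 →
      ∃ G : (Fin n → Γ) → V, Continuous G ∧ cochainD (fun γ v => ρ γ v) n G = F ∧
        supNorm G ≤ ((c' * K * c'' : ℝ≥0) : ℝ≥0∞) * supNorm F) := by
  have : IsUltrametricDist V :=
    IsUltrametricDist.isUltrametricDist_of_forall_norm_add_le_max_norm hna
  exact IsUniformlyStrictExact.of_addSubgroup hρiso hρcont hactS hactQ hK hc' hc''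
    (AddMonoidHom.mk' s hadd) hsec hbd ⟨hexactS0, hexactS⟩ ⟨hexactQ0, hexactQ⟩

/-- Let `0 → V' → V → V'' → 0` be a `Γ`-equivariant exact sequence of nonarchimedean Banach
`Γ`-modules, with `Γ` profinite acting continuously by isometries, `V' = S` a closed subgroup
of `V` with the induced norm, and `V'' = V ⧸ S` with the quotient norm.  Suppose the quotient
map admits a bounded additive section `s` with `‖s q‖ ≤ K ‖q‖` (`K ≥ 1`), and that
`C^•(Γ, V')` and `C^•(Γ, V'')` are uniformly strict exact with constants `c' ≥ 1` and
`c'' ≥ 1` (including vanishing of `H^0`).  Then `C^•(Γ, V)` is uniformly strict exact with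
constant `c' K c''`. -/
theorem stmt_8 {Γ V : Type*} [Group Γ] [TopologicalSpace Γ] [IsTopologicalGroup Γ]
    [CompactSpace Γ] [T2Space Γ] [TotallyDisconnectedSpace Γ]
    [NormedAddCommGroup V] [CompleteSpace V]
    (hna : ∀ x y : V, ‖x + y‖ ≤ max ‖x‖ ‖y‖)
    (ρ : Γ →* Multiplicative (AddAut V))
    (hρiso : ∀ (γ : Γ) (v : V), ‖ρ γ v‖ = ‖v‖)
    (hρcont : Continuous fun p : Γ × V => ρ p.1 p.2)
    (S : AddSubgroup V) (hSclosed : IsClosed (S : Set V))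
    (actS : Γ → S → S)
    (hactS : ∀ (γ : Γ) (x : S), (actS γ x : V) = ρ γ (x : V))
    (actQ : Γ → V ⧸ S → V ⧸ S)
    (hactQ : ∀ (γ : Γ) (v : V),
      actQ γ (QuotientAddGroup.mk v) = QuotientAddGroup.mk (ρ γ v))
    (K : ℝ≥0) (hK : 1 ≤ K)
    (s : V ⧸ S → V) (hadd : ∀ x y, s (x + y) = s x + s y)
    (hsec : ∀ q : V ⧸ S, (QuotientAddGroup.mk (s q) : V ⧸ S) = q)
    (hbd : ∀ q : V ⧸ S, ‖s q‖ ≤ (K : ℝ) * ‖q‖)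
    (c' c'' : ℝ≥0) (hc' : 1 ≤ c') (hc'' : 1 ≤ c'')
    (hexactS0 : ∀ F : (Fin 0 → Γ) → S, Continuous F → cochainD actS 0 F = 0 → F = 0)
    (hexactS : ∀ (n : ℕ) (F : (Fin (n + 1) → Γ) → S), Continuous F →
      cochainD actS (n + 1) F = 0 →
      ∃ G : (Fin n → Γ) → S, Continuous G ∧ cochainD actS n G = F ∧
        supNorm G ≤ (c' : ℝ≥0∞) * supNorm F)
    (hexactQ0 : ∀ F : (Fin 0 → Γ) → V ⧸ S, Continuous F → cochainD actQ 0 F = 0 → F = 0)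
    (hexactQ : ∀ (n : ℕ) (F : (Fin (n + 1) → Γ) → V ⧸ S), Continuous F →
      cochainD actQ (n + 1) F = 0 →
      ∃ G : (Fin n → Γ) → V ⧸ S, Continuous G ∧ cochainD actQ n G = F ∧
        supNorm G ≤ (c'' : ℝ≥0∞) * supNorm F) :
    (∀ F : (Fin 0 → Γ) → V, Continuous F →
      cochainD (fun γ v => ρ γ v) 0 F = 0 → F = 0) ∧
    (∀ (n : ℕ) (F : (Fin (n + 1) → Γ) → V), Continuous F →
      cochainD (fun γ v => ρ γ v) (n + 1) F = 0 →
      ∃ G : (Fin n → Γ) → V, Continuous G ∧ cochainD (fun γ v => ρ γ v) n G = F ∧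
        supNorm G ≤ ((c' * K * c'' : ℝ≥0) : ℝ≥0∞) * supNorm F) :=
  stmt_8_general hna ρ hρiso hρcont S actS hactS actQ hactQ K hK s hadd hsec hbd c' c'' hc' hc''
    hexactS0 hexactS hexactQ0 hexactQ
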